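/- arXiv:1205.6971 — 4 statements merged into one kernel-verified Lean document; each statement's English description precedes it below -/
import Mathlib

section
/- Let $I$ be a monomial ideal in $S=\mathbb{K}[x_1,\dots,x_n]$. Then there exists an integer $k\geq 1$ such that for every monomial $u\in S$, $u$ lies in the integral closure $\overline{I}$ if and only if $u^k\in I^k$. -/
open MvPolynomial

noncomputable section

/-- `I` is a monomial ideal: it is generated by a set of monomials. -/
def IsMonomialIdeal {K : Type*} [Field K] {n : ℕ} (I : Ideal (MvPolynomial (Fin n) K)) : Prop :=
  ∃ A : Set (Fin n →₀ ℕ),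
    I = Ideal.span ((fun d => (monomial d (1 : K) : MvPolynomial (Fin n) K)) '' A)

/-- The integral closure of a monomial ideal `I`: the ideal generated by all monomials `u`
such that `u ^ m ∈ I ^ m` for some `m ≥ 1`. -/
def intCl {K : Type*} [Field K] {n : ℕ} (I : Ideal (MvPolynomial (Fin n) K)) :
    Ideal (MvPolynomial (Fin n) K) :=
  Ideal.span {u | (∃ d : Fin n →₀ ℕ, u = monomial d (1 : K)) ∧ ∃ m : ℕ, 1 ≤ m ∧ u ^ m ∈ I ^ m}

/-- The set of exponent vectors of monomials belonging to `I`. -/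
def monomialSet {K : Type*} [Field K] {n : ℕ} (I : Ideal (MvPolynomial (Fin n) K)) :
    Set (Fin n →₀ ℕ) :=
  {d | (monomial d (1 : K) : MvPolynomial (Fin n) K) ∈ I}

/-- The set of exponent vectors of the monomials in the Stanley space `a·K[Z]`. -/
def stanleySpace {n : ℕ} (a : Fin n →₀ ℕ) (Z : Finset (Fin n)) : Set (Fin n →₀ ℕ) :=
  {b | (∀ i, a i ≤ b i) ∧ ∀ i ∉ Z, b i = a i}

/-- `D` is a Stanley decomposition of the set of monomials `M`. -/
def IsStanleyDecomp {n : ℕ} (M : Set (Fin n →₀ ℕ))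
    (D : Finset ((Fin n →₀ ℕ) × Finset (Fin n))) : Prop :=
  (∀ p ∈ D, stanleySpace p.1 p.2 ⊆ M) ∧
  (∀ b ∈ M, ∃ p ∈ D, b ∈ stanleySpace p.1 p.2) ∧
  (∀ p ∈ D, ∀ q ∈ D, p ≠ q → Disjoint (stanleySpace p.1 p.2) (stanleySpace q.1 q.2))

/-- Stanley depth of a set of monomials. -/
def sdepthSet {n : ℕ} (M : Set (Fin n →₀ ℕ)) : ℕ :=
  sSup {k | k ≤ n ∧ ∃ D : Finset ((Fin n →₀ ℕ) × Finset (Fin n)),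
    IsStanleyDecomp M D ∧ ∀ p ∈ D, k ≤ p.2.card}

/-- Stanley depth of a monomial ideal `I` (as a module). -/
def sdepthI {K : Type*} [Field K] {n : ℕ} (I : Ideal (MvPolynomial (Fin n) K)) : ℕ :=
  sdepthSet (monomialSet I)

/-- Stanley depth of `S/I` for a monomial ideal `I`. -/
def sdepthQ {K : Type*} [Field K] {n : ℕ} (I : Ideal (MvPolynomial (Fin n) K)) : ℕ :=
  sdepthSet (monomialSet I)ᶜ

/-- Stanley depth of `I/J` for monomial ideals `J ⊆ I`. -/
def sdepthIJ {K : Type*} [Field K] {n : ℕ} (I J : Ideal (MvPolynomial (Fin n) K)) : ℕ :=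
  sdepthSet (monomialSet I \ monomialSet J)


/-
A monomial lies in `intCl I` iff it is divisible by one of the generating monomials `u` with
`u ^ m ∈ I ^ m` for some `m ≥ 1`. By Noetherianity finitely many such generators `u₁, …, u_r`
(with exponents `m₁, …, m_r`) already span `intCl I`, and `k = m₁ ⋯ m_r` works for all of them at
once: `uᵢ ^ k = (uᵢ ^ mᵢ) ^ (k / mᵢ) ∈ I ^ k`, and this passes to every multiple of `uᵢ`.
-/

theorem Ideal.pow_mem_pow_of_dvd {R : Type*} [CommSemiring R] {I : Ideal R} {x : R} {m k : ℕ}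
    (hx : x ^ m ∈ I ^ m) (hmk : m ∣ k) : x ^ k ∈ I ^ k := by
  obtain ⟨c, rfl⟩ := hmk
  rw [pow_mul, pow_mul]
  exact Ideal.pow_mem_pow hx c

theorem Ideal.exists_finset_subset_span_image_eq {R ι : Type*} [CommSemiring R]
    [IsNoetherianRing R] (f : ι → R) (E : Set ι) :
    ∃ F : Finset ι, ↑F ⊆ E ∧ Ideal.span (f '' F) = Ideal.span (f '' E) := by
  obtain ⟨t, htE, hspan⟩ :=
    (Submodule.fg_span_iff_fg_span_finset_subset _).1 (IsNoetherian.noetherian (Ideal.span (f '' E)))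
  obtain ⟨F, hFE, hFfin, hF⟩ :=
    (Set.exists_subset_image_finite_and (p := fun s => Ideal.span s = Ideal.span (f '' E))).1
      ⟨_, htE, t.finite_toSet, hspan.symm⟩
  lift F to Finset ι using hFfin
  exact ⟨F, hFE, hF⟩

theorem MvPolynomial.monomial_mem_span_monomial_image_iff {σ R : Type*} [CommSemiring R]
    [Nontrivial R] {d : σ →₀ ℕ} {s : Set (σ →₀ ℕ)} :
    monomial d (1 : R) ∈ Ideal.span ((fun e => monomial e (1 : R)) '' s) ↔ ∃ e ∈ s, e ≤ d := by
  classical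
  rw [mem_ideal_span_monomial_image, support_monomial, if_neg one_ne_zero]
  simp only [Finset.mem_singleton, forall_eq]

def intClExponents {K : Type*} [Field K] {n : ℕ} (I : Ideal (MvPolynomial (Fin n) K)) :
    Set (Fin n →₀ ℕ) :=
  {e | ∃ m : ℕ, 1 ≤ m ∧ (monomial e (1 : K) : MvPolynomial (Fin n) K) ^ m ∈ I ^ m}

theorem intCl_eq_span_monomial_image {K : Type*} [Field K] {n : ℕ}
    (I : Ideal (MvPolynomial (Fin n) K)) :
    intCl I = Ideal.span ((fun e => monomial e (1 : K)) '' intClExponents I) := by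
  rw [intCl]
  congr 1
  ext u
  constructor
  · rintro ⟨⟨d, rfl⟩, hd⟩
    exact ⟨d, hd, rfl⟩
  · rintro ⟨d, hd, rfl⟩
    exact ⟨⟨d, rfl⟩, hd⟩

theorem stmt0_general {K : Type*} [Field K] {n : ℕ} (I : Ideal (MvPolynomial (Fin n) K)) :
    ∃ k : ℕ, 1 ≤ k ∧ ∀ d : Fin n →₀ ℕ,
      ((monomial d (1 : K) : MvPolynomial (Fin n) K) ∈ intCl I ↔
        (monomial d (1 : K) : MvPolynomial (Fin n) K) ^ k ∈ I ^ k) := by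
  obtain ⟨F, hFE, hF⟩ :=
    Ideal.exists_finset_subset_span_image_eq (fun e => monomial e (1 : K)) (intClExponents I)
  choose! m hm_pos hm_mem using fun e (he : e ∈ F) => hFE he
  have hk : 0 < ∏ e ∈ F, m e := Finset.prod_pos hm_pos
  refine ⟨∏ e ∈ F, m e, hk, fun d =>
    ⟨fun hd => ?_, fun hd => Ideal.subset_span ⟨⟨d, rfl⟩, _, hk, hd⟩⟩⟩
  rw [intCl_eq_span_monomial_image, ← hF, monomial_mem_span_monomial_image_iff] at hd
  obtain ⟨e, he, hed⟩ := hd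
  rw [← add_tsub_cancel_of_le hed, ← one_mul (1 : K), ← monomial_mul, mul_pow]
  exact Ideal.mul_mem_right _ _
    (Ideal.pow_mem_pow_of_dvd (hm_mem e he) (Finset.dvd_prod_of_mem m he))

theorem stmt0 {K : Type*} [Field K] {n : ℕ} (I : Ideal (MvPolynomial (Fin n) K))
    (hI : IsMonomialIdeal I) :
    ∃ k : ℕ, 1 ≤ k ∧ ∀ d : Fin n →₀ ℕ,
      ((monomial d (1 : K) : MvPolynomial (Fin n) K) ∈ intCl I ↔
        (monomial d (1 : K) : MvPolynomial (Fin n) K) ^ k ∈ I ^ k) :=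
  stmt0_general I
end
end

section
/- Let $J\subseteq I$ be monomial ideals in $S=\mathbb{K}[x_1,\dots,x_n]$. Then for every integer $k\geq 1$, $\mathrm{sdepth}(\overline{I^k}/\overline{J^k})\leq \mathrm{sdepth}(\overline{I}/\overline{J})$. -/
open MvPolynomial

noncomputable section

/-!
A monomial `x^d` lies in `intCl I` iff `x^(m•d) ∈ I^m` for some `m ≥ 1`; hence `x^d ∈ intCl I` iff
`x^(k•d) ∈ intCl (I^k)`, so the monomials of `intCl I / intCl J` are those of
`intCl (I^k) / intCl (J^k)` divided by `k`. Dividing a Stanley decomposition of the latter by `k`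
gives one of the former: keep the Stanley spaces `x^a K[Z]` with `k ∣ aᵢ` for `i ∉ Z` and replace
`a` by `⌈a/k⌉`; the sets `Z`, hence the Stanley depth, do not change.
-/

section StanleyDecomposition

variable {n k : ℕ}

lemma dvd_of_smul_mem_stanleySpace {a c : Fin n →₀ ℕ} {Z : Finset (Fin n)}
    (h : k • c ∈ stanleySpace a Z) (i : Fin n) (hi : i ∉ Z) : k ∣ a i :=
  ⟨c i, (h.2 i hi).symm⟩

lemma smul_mem_stanleySpace_iff (hk : 0 < k) {a : Fin n →₀ ℕ} {Z : Finset (Fin n)}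
    (hdvd : ∀ i ∉ Z, k ∣ a i) (c : Fin n →₀ ℕ) :
    k • c ∈ stanleySpace a Z ↔ c ∈ stanleySpace (a ⌈/⌉ k) Z := by
  have coord (i : Fin n) (hi : i ∉ Z) : (a ⌈/⌉ k) i = c i ↔ k * c i = a i := by
    obtain ⟨t, ht⟩ := hdvd i hi
    rw [Finsupp.ceilDiv_apply, ht, ← smul_eq_mul, smul_ceilDiv hk, smul_eq_mul,
      Nat.mul_left_cancel_iff hk, eq_comm]
  simp only [stanleySpace, Set.mem_ofPred_eq, Finsupp.smul_apply, smul_eq_mul,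
    Finsupp.ceilDiv_apply, ceilDiv_le_iff_le_mul hk]
  constructor
  · rintro ⟨hle, heq⟩
    exact ⟨hle, fun i hi => ((coord i hi).2 (heq i hi)).symm⟩
  · rintro ⟨hle, heq⟩
    exact ⟨hle, fun i hi => (coord i hi).1 (heq i hi).symm⟩

def stanleyDecompCeilDiv (k : ℕ) (D : Finset ((Fin n →₀ ℕ) × Finset (Fin n))) :
    Finset ((Fin n →₀ ℕ) × Finset (Fin n)) :=
  open Classical in
  (D.filter fun p => ∀ i ∉ p.2, k ∣ p.1 i).image fun p => (p.1 ⌈/⌉ k, p.2)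

lemma mem_stanleyDecompCeilDiv {D : Finset ((Fin n →₀ ℕ) × Finset (Fin n))}
    {q : (Fin n →₀ ℕ) × Finset (Fin n)} :
    q ∈ stanleyDecompCeilDiv k D ↔
      ∃ p ∈ D, (∀ i ∉ p.2, k ∣ p.1 i) ∧ (p.1 ⌈/⌉ k, p.2) = q := by
  classical
  simp [stanleyDecompCeilDiv, and_assoc]

lemma IsStanleyDecomp.ceilDiv (hk : 0 < k) {M Mk : Set (Fin n →₀ ℕ)}
    (hM : ∀ c, c ∈ M ↔ k • c ∈ Mk) {D : Finset ((Fin n →₀ ℕ) × Finset (Fin n))}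
    (hD : IsStanleyDecomp Mk D) : IsStanleyDecomp M (stanleyDecompCeilDiv k D) := by
  obtain ⟨hsub, hcover, hdisj⟩ := hD
  refine ⟨?_, ?_, ?_⟩
  · rintro _ hq c hc
    obtain ⟨p, hp, hdvd, rfl⟩ := mem_stanleyDecompCeilDiv.1 hq
    exact (hM c).2 (hsub p hp ((smul_mem_stanleySpace_iff hk hdvd c).2 hc))
  · intro c hc
    obtain ⟨p, hp, hcp⟩ := hcover (k • c) ((hM c).1 hc)
    have hdvd := dvd_of_smul_mem_stanleySpace hcp
    exact ⟨_, mem_stanleyDecompCeilDiv.2 ⟨p, hp, hdvd, rfl⟩,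
      (smul_mem_stanleySpace_iff hk hdvd c).1 hcp⟩
  · rintro _ hq₁ _ hq₂ hne
    obtain ⟨p₁, hp₁, hdvd₁, rfl⟩ := mem_stanleyDecompCeilDiv.1 hq₁
    obtain ⟨p₂, hp₂, hdvd₂, rfl⟩ := mem_stanleyDecompCeilDiv.1 hq₂
    have hp : p₁ ≠ p₂ := by rintro rfl; exact hne rfl
    refine Set.disjoint_left.2 fun c hc₁ hc₂ => Set.disjoint_left.1 (hdisj p₁ hp₁ p₂ hp₂ hp)
      ((smul_mem_stanleySpace_iff hk hdvd₁ c).2 hc₁) ((smul_mem_stanleySpace_iff hk hdvd₂ c).2 hc₂)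

lemma sdepthSet_le_of_smul_mem_iff (hk : 0 < k) {M Mk : Set (Fin n →₀ ℕ)}
    (hM : ∀ c, c ∈ M ↔ k • c ∈ Mk) : sdepthSet Mk ≤ sdepthSet M := by
  refine csSup_le_csSup' ⟨n, fun s hs => hs.1⟩ ?_
  rintro s ⟨hsn, D, hD, hcard⟩
  refine ⟨hsn, _, hD.ceilDiv hk hM, fun q hq => ?_⟩
  obtain ⟨p, hp, -, rfl⟩ := mem_stanleyDecompCeilDiv.1 hq
  exact hcard p hp

end StanleyDecomposition

section IntegralClosure

variable {K : Type*} [Field K] {n : ℕ}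

lemma mem_monomialSet_intCl_iff (I : Ideal (MvPolynomial (Fin n) K)) (d : Fin n →₀ ℕ) :
    d ∈ monomialSet (intCl I) ↔
      ∃ m, 1 ≤ m ∧ (monomial (m • d) (1 : K) : MvPolynomial (Fin n) K) ∈ I ^ m := by
  have hspan : intCl I = Ideal.span ((fun e => monomial e (1 : K)) ''
      {e | ∃ m, 1 ≤ m ∧ (monomial (m • e) (1 : K) : MvPolynomial (Fin n) K) ∈ I ^ m}) := by
    refine congrArg Ideal.span (Set.ext fun u => ⟨?_, ?_⟩)
    · rintro ⟨⟨e, rfl⟩, m, hm, he⟩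
      exact ⟨e, ⟨m, hm, by rwa [monomial_pow, one_pow] at he⟩, rfl⟩
    · rintro ⟨e, ⟨m, hm, he⟩, rfl⟩
      exact ⟨⟨e, rfl⟩, m, hm, by rwa [monomial_pow, one_pow]⟩
  classical
  rw [monomialSet, Set.mem_ofPred_eq, hspan, mem_ideal_span_monomial_image]
  simp only [support_monomial, one_ne_zero, if_false, Finset.mem_singleton, forall_eq]
  constructor
  · rintro ⟨e, ⟨m, hm, he⟩, hle⟩
    refine ⟨m, hm, ?_⟩
    rw [← add_tsub_cancel_of_le hle, smul_add, ← one_mul (1 : K), ← monomial_mul]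
    exact (I ^ m).mul_mem_right _ he
  · rintro ⟨m, hm, hd⟩
    exact ⟨d, ⟨m, hm, hd⟩, le_rfl⟩

lemma smul_mem_monomialSet_intCl_pow_iff (I : Ideal (MvPolynomial (Fin n) K)) {k : ℕ}
    (hk : 0 < k) (d : Fin n →₀ ℕ) :
    k • d ∈ monomialSet (intCl (I ^ k)) ↔ d ∈ monomialSet (intCl I) := by
  simp only [mem_monomialSet_intCl_iff, smul_smul, ← pow_mul]
  constructor
  · rintro ⟨m, hm, hd⟩
    exact ⟨m * k, Nat.mul_pos hm hk, by rwa [mul_comm k m] at hd⟩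
  · rintro ⟨m, hm, hd⟩
    refine ⟨m, hm, ?_⟩
    simpa only [monomial_pow, one_pow, smul_smul, ← pow_mul, mul_comm] using
      Ideal.pow_mem_pow hd k

end IntegralClosure

theorem stmt6_general {K : Type*} [Field K] {n : ℕ} (I J : Ideal (MvPolynomial (Fin n) K))
    (k : ℕ) (hk : 1 ≤ k) :
    sdepthIJ (intCl (I ^ k)) (intCl (J ^ k)) ≤ sdepthIJ (intCl I) (intCl J) :=
  sdepthSet_le_of_smul_mem_iff hk fun c => by
    simp only [Set.mem_sdiff, smul_mem_monomialSet_intCl_pow_iff _ hk]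

theorem stmt6 {K : Type*} [Field K] {n : ℕ} (I J : Ideal (MvPolynomial (Fin n) K))
    (hI : IsMonomialIdeal I) (hJ : IsMonomialIdeal J) (hJI : J ≤ I) (k : ℕ) (hk : 1 ≤ k) :
    sdepthIJ (intCl (I ^ k)) (intCl (J ^ k)) ≤ sdepthIJ (intCl I) (intCl J) :=
  stmt6_general I J k hk
end
end

section
/- Let $I$ be a monomial ideal in $S=\mathbb{K}[x_1,\dots,x_n]$. Then $\min_k\{\mathrm{sdepth}(S/I^k)\}\leq\mathrm{sdepth}(S/\overline{I})$ and $\min_k\{\mathrm{sdepth}(I^k)\}\leq\mathrm{sdepth}(\overline{I})$, where the minima are taken over all integers $k\geq 1$. -/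
open MvPolynomial

noncomputable section

/-!
A monomial `x^d` lies in `intCl I` iff `m • d` is the exponent of a monomial of `I ^ m` for
some `m ≥ 1`. Exponent sets of ideals are upper sets and `ℕⁿ` is well-quasi-ordered (Dickson),
so finitely many such `d` suffice, and a common multiple `k` of their witnesses `m` works for
all of them: the exponents of `intCl I` are exactly the preimage of those of `I ^ k` under
`d ↦ k • d`. Pulling a Stanley decomposition back along this map sends `a·K[Z]` to
`⌈a / k⌉·K[Z]` or to nothing, so it keeps every `Z`; thus Stanley depth can only grow, both for
the ideals and for the complements.
-/

section FiniteBasis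

variable {α : Type*}

theorem exists_finite_subset_forall_exists_le [PartialOrder α] [WellQuasiOrderedLE α]
    (B : Set α) : ∃ F : Set α, F.Finite ∧ F ⊆ B ∧ ∀ a ∈ B, ∃ f ∈ F, f ≤ a :=
  ⟨{f | Minimal (· ∈ B) f},
    WellQuasiOrderedLE.finite_of_isAntichain (setOfPred_minimal_antichain _),
    fun _ hf => hf.prop, fun a ha =>
      (exists_minimal_le_of_wellFoundedLT _ a ha).imp fun _ ⟨hle, hmin⟩ => ⟨hmin, hle⟩⟩

theorem exists_pos_setOf_nsmul_mem_eq_preimage [AddCommMonoid α] [PartialOrder α]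
    [IsOrderedAddMonoid α] [WellQuasiOrderedLE α] (P : ℕ → Set α) (hP : ∀ m, IsUpperSet (P m))
    (hP_nsmul : ∀ m t a, a ∈ P m → t • a ∈ P (t * m)) :
    ∃ k, 0 < k ∧ {a | ∃ m, 1 ≤ m ∧ m • a ∈ P m} = (k • ·) ⁻¹' P k := by
  set B := {a | ∃ m, 1 ≤ m ∧ m • a ∈ P m}
  obtain ⟨F, hF, hFB, hBF⟩ := exists_finite_subset_forall_exists_le B
  choose! g hg_pos hg using fun f (hf : f ∈ F) => hFB hf
  set k := ∏ f ∈ hF.toFinset, g f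
  have hk : 0 < k := Finset.prod_pos fun f hf => hg_pos f (hF.mem_toFinset.1 hf)
  have hkF : ∀ f ∈ F, k • f ∈ P k := by
    intro f hf
    obtain ⟨t, ht⟩ : g f ∣ k := Finset.dvd_prod_of_mem g (hF.mem_toFinset.2 hf)
    rw [ht, mul_comm, mul_nsmul']
    exact hP_nsmul _ _ _ (hg f hf)
  refine ⟨k, hk, Set.ext fun a => ⟨fun ha => ?_, fun ha => ⟨k, hk, ha⟩⟩⟩
  obtain ⟨f, hf, hfa⟩ := hBF a ha
  exact hP k (nsmul_le_nsmul_right hfa k) (hkF f hf)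

end FiniteBasis

section MonomialSet

variable {σ R : Type*} [CommSemiring R] [Nontrivial R]

theorem monomial_one_mem_span_monomial_image_iff {A : Set (σ →₀ ℕ)} {d : σ →₀ ℕ} :
    monomial d (1 : R) ∈ Ideal.span ((fun e => monomial e (1 : R)) '' A) ↔ ∃ a ∈ A, a ≤ d := by
  classical
  simp [mem_ideal_span_monomial_image, support_monomial]

variable {K : Type*} [Field K] {n : ℕ}

theorem isUpperSet_monomialSet (J : Ideal (MvPolynomial (Fin n) K)) :
    IsUpperSet (monomialSet J) := by
  intro d e hde hd
  have : monomial (e - d) (1 : K) * monomial d 1 ∈ J := J.mul_mem_left _ hd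
  rwa [monomial_mul, tsub_add_cancel_of_le hde, one_mul] at this

theorem nsmul_mem_monomialSet_pow {J : Ideal (MvPolynomial (Fin n) K)} {d : Fin n →₀ ℕ}
    (hd : d ∈ monomialSet J) (t : ℕ) : t • d ∈ monomialSet (J ^ t) := by
  have := Ideal.pow_mem_pow hd t
  rwa [monomial_pow, one_pow] at this

theorem monomialSet_intCl (I : Ideal (MvPolynomial (Fin n) K)) :
    monomialSet (intCl I) = {d | ∃ m, 1 ≤ m ∧ m • d ∈ monomialSet (I ^ m)} := by
  set B := {d | ∃ m, 1 ≤ m ∧ m • d ∈ monomialSet (I ^ m)}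
  have hB : IsUpperSet B := fun d e hde ⟨m, hm, hd⟩ =>
    ⟨m, hm, isUpperSet_monomialSet _ (nsmul_le_nsmul_right hde m) hd⟩
  have hspan : intCl I = Ideal.span ((fun d => monomial d (1 : K)) '' B) := by
    rw [intCl]
    congr 1
    ext u
    simp only [Set.mem_ofPred_eq, Set.mem_image, monomialSet, B]
    constructor
    · rintro ⟨⟨d, rfl⟩, hu⟩
      exact ⟨d, by simpa only [monomial_pow, one_pow] using hu, rfl⟩
    · rintro ⟨d, hd, rfl⟩
      exact ⟨⟨d, rfl⟩, by simpa only [monomial_pow, one_pow] using hd⟩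
  ext d
  rw [monomialSet, Set.mem_ofPred_eq, hspan, monomial_one_mem_span_monomial_image_iff]
  exact ⟨fun ⟨e, he, hed⟩ => hB hed he, fun hd => ⟨d, hd, le_rfl⟩⟩

theorem exists_monomialSet_intCl_eq_preimage_nsmul (I : Ideal (MvPolynomial (Fin n) K)) :
    ∃ k, 0 < k ∧ monomialSet (intCl I) = (k • ·) ⁻¹' monomialSet (I ^ k) := by
  rw [monomialSet_intCl]
  refine exists_pos_setOf_nsmul_mem_eq_preimage _ (fun _ => isUpperSet_monomialSet _)
    fun m t d hd => ?_
  rw [mul_comm, pow_mul]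
  exact nsmul_mem_monomialSet_pow hd t

end MonomialSet

section StanleyDecomposition

variable {n : ℕ}

theorem dvd_of_nsmul_mem_stanleySpace {k : ℕ} {a b : Fin n →₀ ℕ} {Z : Finset (Fin n)}
    (hb : k • b ∈ stanleySpace a Z) (i : Fin n) (hi : i ∉ Z) : k ∣ a i :=
  ⟨b i, (hb.2 i hi).symm⟩

theorem preimage_nsmul_stanleySpace {k : ℕ} (hk : 0 < k) {a : Fin n →₀ ℕ} {Z : Finset (Fin n)}
    (ha : ∀ i ∉ Z, k ∣ a i) : (k • ·) ⁻¹' stanleySpace a Z = stanleySpace (a ⌈/⌉ k) Z := by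
  ext b
  simp only [stanleySpace, Set.mem_preimage, Set.mem_ofPred_eq, Finsupp.smul_apply, smul_eq_mul,
    Finsupp.ceilDiv_apply, ← ceilDiv_le_iff_le_mul hk]
  refine and_congr_right fun _ => forall₂_congr fun i hi => ?_
  obtain ⟨c, hc⟩ := ha i hi
  rw [hc, show k * c ⌈/⌉ k = c from smul_ceilDiv hk c]
  exact Nat.mul_left_cancel_iff hk

/-- Only the Stanley spaces `a·K[Z]` whose preimage is nonempty contribute. -/
def stanleyDecompPreimageNsmul (k : ℕ) (D : Finset ((Fin n →₀ ℕ) × Finset (Fin n))) :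
    Finset ((Fin n →₀ ℕ) × Finset (Fin n)) :=
  open scoped Classical in
  (D.filter fun p => ∀ i ∉ p.2, k ∣ p.1 i).image fun p => (p.1 ⌈/⌉ k, p.2)

theorem IsStanleyDecomp.preimage_nsmul {k : ℕ} (hk : 0 < k) {M : Set (Fin n →₀ ℕ)}
    {D : Finset ((Fin n →₀ ℕ) × Finset (Fin n))} (hD : IsStanleyDecomp M D) :
    IsStanleyDecomp ((k • ·) ⁻¹' M) (stanleyDecompPreimageNsmul k D) := by
  classical
  obtain ⟨hsub, hcover, hdisj⟩ := hD
  simp only [IsStanleyDecomp, stanleyDecompPreimageNsmul, Finset.mem_image, Finset.mem_filter]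
  refine ⟨?_, fun b hb => ?_, ?_⟩
  · rintro _ ⟨p, ⟨hp, hpk⟩, rfl⟩
    rw [← preimage_nsmul_stanleySpace hk hpk]
    exact Set.preimage_mono (hsub p hp)
  · obtain ⟨p, hp, hbp⟩ := hcover _ hb
    have hpk := dvd_of_nsmul_mem_stanleySpace hbp
    refine ⟨_, ⟨p, ⟨hp, hpk⟩, rfl⟩, ?_⟩
    rwa [← preimage_nsmul_stanleySpace hk hpk]
  · rintro _ ⟨p, ⟨hp, hpk⟩, rfl⟩ _ ⟨q, ⟨hq, hqk⟩, rfl⟩ hne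
    rw [← preimage_nsmul_stanleySpace hk hpk, ← preimage_nsmul_stanleySpace hk hqk]
    exact (hdisj p hp q hq (by rintro rfl; exact hne rfl)).preimage _

theorem sdepthSet_le_of_forall_isStanleyDecomp {M M' : Set (Fin n →₀ ℕ)}
    (h : ∀ D, IsStanleyDecomp M D →
      ∃ D', IsStanleyDecomp M' D' ∧ ∀ p' ∈ D', ∃ p ∈ D, p.2.card ≤ p'.2.card) :
    sdepthSet M ≤ sdepthSet M' := by
  refine csSup_le_csSup' ⟨n, fun _ hj => hj.1⟩ ?_
  rintro j ⟨hjn, D, hD, hcard⟩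
  obtain ⟨D', hD', hD'D⟩ := h D hD
  refine ⟨hjn, D', hD', fun p' hp' => ?_⟩
  obtain ⟨p, hp, hle⟩ := hD'D p' hp'
  exact (hcard p hp).trans hle

theorem sdepthSet_le_sdepthSet_preimage_nsmul {k : ℕ} (hk : 0 < k) (M : Set (Fin n →₀ ℕ)) :
    sdepthSet M ≤ sdepthSet ((k • ·) ⁻¹' M) := by
  classical
  refine sdepthSet_le_of_forall_isStanleyDecomp fun D hD => ⟨_, hD.preimage_nsmul hk, ?_⟩
  simp only [stanleyDecompPreimageNsmul, Finset.mem_image, Finset.mem_filter]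
  rintro _ ⟨p, ⟨hp, -⟩, rfl⟩
  exact ⟨p, hp, le_rfl⟩

end StanleyDecomposition

theorem stmt10_general {K : Type*} [Field K] {n : ℕ} (I : Ideal (MvPolynomial (Fin n) K)) :
    sInf {m | ∃ k : ℕ, 1 ≤ k ∧ m = sdepthQ (I ^ k)} ≤ sdepthQ (intCl I) ∧
    sInf {m | ∃ k : ℕ, 1 ≤ k ∧ m = sdepthI (I ^ k)} ≤ sdepthI (intCl I) := by
  obtain ⟨k, hk, hintCl⟩ := exists_monomialSet_intCl_eq_preimage_nsmul I
  constructor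
  · refine le_trans (Nat.sInf_le ⟨k, hk, rfl⟩) ?_
    rw [sdepthQ, sdepthQ, hintCl, ← Set.preimage_compl]
    exact sdepthSet_le_sdepthSet_preimage_nsmul hk _
  · refine le_trans (Nat.sInf_le ⟨k, hk, rfl⟩) ?_
    rw [sdepthI, sdepthI, hintCl]
    exact sdepthSet_le_sdepthSet_preimage_nsmul hk _

theorem stmt10 {K : Type*} [Field K] {n : ℕ} (I : Ideal (MvPolynomial (Fin n) K))
    (hI : IsMonomialIdeal I) :
    sInf {m | ∃ k : ℕ, 1 ≤ k ∧ m = sdepthQ (I ^ k)} ≤ sdepthQ (intCl I) ∧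
    sInf {m | ∃ k : ℕ, 1 ≤ k ∧ m = sdepthI (I ^ k)} ≤ sdepthI (intCl I) :=
  stmt10_general I
end
end

section
/- Let $I$ be a monomial ideal in $S=\mathbb{K}[x_1,\dots,x_n]$ and let $P=(x_{i_1},\dots,x_{i_r})$ be a monomial prime ideal. Let $\varphi: S\to S(P)=\mathbb{K}[x_{i_1},\dots,x_{i_r}]$ be the $\mathbb{K}$-algebra homomorphism sending $x_i\mapsto 1$ for $i\notin\{i_1,\dots,i_r\}$ and $x_{i_j}\mapsto x_{i_j}$. Then the integral closure of the image ideal equals the image of the integral closure: $\overline{I(P)}=\overline{I}(P)$, where $J(P)$ denotes the ideal of $S(P)$ generated by $\varphi(J)$. -/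
open MvPolynomial

noncomputable section

/-- `I` is a monomial ideal: it is generated by a set of monomials. -/
def IsMonomialIdealG {K : Type*} [Field K] {σ : Type*} (I : Ideal (MvPolynomial σ K)) : Prop :=
  ∃ A : Set (σ →₀ ℕ),
    I = Ideal.span ((fun d => (monomial d (1 : K) : MvPolynomial σ K)) '' A)

/-- The integral closure of a monomial ideal `I`: the ideal generated by all monomials `u`
such that `u ^ m ∈ I ^ m` for some `m ≥ 1`. -/
def intClG {K : Type*} [Field K] {σ : Type*} (I : Ideal (MvPolynomial σ K)) :
    Ideal (MvPolynomial σ K) :=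
  Ideal.span {u | (∃ d : σ →₀ ℕ, u = monomial d (1 : K)) ∧ ∃ m : ℕ, 1 ≤ m ∧ u ^ m ∈ I ^ m}

/-! Specialization sends `x^d` to `x^(d|_p)`, so the map of `intClG I` lies in the integral
closure of the map of `I` by functoriality of `u ^ m ∈ I ^ m`. Conversely, if `(x^e)^m` lies in
`I(P)^m = (I^m)(P)`, some monomial `x^b` of the monomial ideal `I^m` has `b|_p ≤ m • e`; the
monomial `x^d` with `d = e` on `p` and `d = b` off `p` then has `x^(m • d) ∈ I^m` (as `m ≥ 1`)
and specializes to `x^e`. -/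

open Pointwise

section MonomialIdeal

variable {K σ : Type*} [Field K]

theorem IsMonomialIdealG.mul {I J : Ideal (MvPolynomial σ K)} (hI : IsMonomialIdealG I)
    (hJ : IsMonomialIdealG J) : IsMonomialIdealG (I * J) := by
  obtain ⟨A, rfl⟩ := hI
  obtain ⟨B, rfl⟩ := hJ
  refine ⟨A + B, ?_⟩
  rw [Ideal.span_mul_span', ← Set.image2_mul, ← Set.image2_add, Set.image_image2,
    Set.image2_image_left, Set.image2_image_right]
  simp only [monomial_mul, mul_one]

theorem IsMonomialIdealG.pow {I : Ideal (MvPolynomial σ K)} (hI : IsMonomialIdealG I) (m : ℕ) :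
    IsMonomialIdealG (I ^ m) := by
  induction m with
  | zero => exact ⟨{0}, by simp [Ideal.span_singleton_one]⟩
  | succ m ih => rw [pow_succ]; exact ih.mul hI

end MonomialIdeal

section Specialization

variable {K σ : Type*} [Field K] (p : σ → Prop) [DecidablePred p]

/-- The map `φ : S → S(P)` of the paper, for `P` generated by the variables in `p`. -/
def specializeOutside : MvPolynomial σ K →ₐ[K] MvPolynomial {i // p i} K :=
  aeval fun i => if h : p i then X ⟨i, h⟩ else 1

theorem specializeOutside_monomial (d : σ →₀ ℕ) :
    specializeOutside p (monomial d (1 : K)) = monomial (d.subtypeDomain p) 1 := by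
  induction d using Finsupp.induction with
  | zero => simp
  | single_add i k d _ _ ih =>
    rw [← mul_one (1 : K), ← monomial_mul, map_mul, ih, Finsupp.subtypeDomain_add,
      ← monomial_mul]
    congr 1
    rw [← X_pow_eq_monomial, map_pow, specializeOutside, aeval_X]
    by_cases h : p i
    · have hsingle : (Finsupp.single i k).subtypeDomain p = Finsupp.single ⟨i, h⟩ k := by
        ext j; exact Finsupp.single_apply_left Subtype.val_injective ⟨i, h⟩ j k
      rw [dif_pos h, hsingle, X_pow_eq_monomial]
    · have hsingle : (Finsupp.single i k).subtypeDomain p = 0 :=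
        Finsupp.subtypeDomain_eq_zero_iff'.2 fun j hj =>
          Finsupp.single_eq_of_ne (by rintro rfl; exact h hj)
      rw [dif_neg h, hsingle, one_pow, monomial_zero', C_1]

theorem map_specializeOutside_span_monomial (A : Set (σ →₀ ℕ)) :
    Ideal.map (specializeOutside p) (Ideal.span ((fun d => monomial d (1 : K)) '' A)) =
      Ideal.span ((fun e => monomial e (1 : K)) '' ((fun d => d.subtypeDomain p) '' A)) := by
  rw [Ideal.map_span, Set.image_image, Set.image_image]
  simp only [specializeOutside_monomial]

theorem map_intClG_le_intClG_map (I : Ideal (MvPolynomial σ K)) :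
    Ideal.map (specializeOutside p) (intClG I) ≤ intClG (Ideal.map (specializeOutside p) I) := by
  rw [intClG, Ideal.map_span, Ideal.span_le]
  rintro _ ⟨_, ⟨⟨d, rfl⟩, m, hm, hpow⟩, rfl⟩
  refine Ideal.subset_span ⟨⟨d.subtypeDomain p, specializeOutside_monomial p d⟩, m, hm, ?_⟩
  rw [← map_pow, ← Ideal.map_pow]
  exact Ideal.mem_map_of_mem _ hpow

theorem IsMonomialIdealG.exists_monomial_mem_of_mem_map {J : Ideal (MvPolynomial σ K)}
    (hJ : IsMonomialIdealG J) {c : {i // p i} →₀ ℕ}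
    (hc : monomial c (1 : K) ∈ Ideal.map (specializeOutside p) J) :
    ∃ b : σ →₀ ℕ, b.subtypeDomain p ≤ c ∧ monomial b (1 : K) ∈ J := by
  obtain ⟨B, rfl⟩ := hJ
  rw [map_specializeOutside_span_monomial, mem_ideal_span_monomial_image] at hc
  obtain ⟨_, ⟨b, hb, rfl⟩, hle⟩ := hc c (by classical simp [coeff_monomial])
  exact ⟨b, hle, Ideal.subset_span ⟨b, hb, rfl⟩⟩

theorem monomial_mem_of_le {J : Ideal (MvPolynomial σ K)} {b d : σ →₀ ℕ}
    (hb : monomial b (1 : K) ∈ J) (h : b ≤ d) : monomial d (1 : K) ∈ J :=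
  J.mem_of_dvd (monomial_dvd_monomial.2 ⟨Or.inr h, one_dvd _⟩) hb

theorem intClG_map_le_map_intClG {I : Ideal (MvPolynomial σ K)} (hI : IsMonomialIdealG I) :
    intClG (Ideal.map (specializeOutside p) I) ≤ Ideal.map (specializeOutside p) (intClG I) := by
  rw [intClG, Ideal.span_le]
  rintro _ ⟨⟨e, rfl⟩, m, hm, hpow⟩
  rw [← Ideal.map_pow, monomial_pow, one_pow] at hpow
  obtain ⟨b, hbe, hb⟩ := (hI.pow m).exists_monomial_mem_of_mem_map p hpow
  set d : σ →₀ ℕ := e.piecewise (b.subtypeDomain (¬ p ·))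
  have hbd : b ≤ m • d := by
    intro i
    by_cases hi : p i
    · simpa [d, hi] using hbe ⟨i, hi⟩
    · simpa [d, hi] using Nat.le_mul_of_pos_left (b i) hm
  have hd : monomial d (1 : K) ∈ intClG I := Ideal.subset_span
    ⟨⟨d, rfl⟩, m, hm, by rw [monomial_pow, one_pow]; exact monomial_mem_of_le hb hbd⟩
  have hde : d.subtypeDomain p = e := Finsupp.subtypeDomain_piecewise _ _
  rw [← hde, ← specializeOutside_monomial]
  exact Ideal.mem_map_of_mem _ hd

end Specialization

theorem stmt12 {K : Type*} [Field K] {n : ℕ} (I : Ideal (MvPolynomial (Fin n) K))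
    (hI : IsMonomialIdealG I) (T : Finset (Fin n))
    (φ : MvPolynomial (Fin n) K →ₐ[K] MvPolynomial {i : Fin n // i ∈ T} K)
    (hφ : φ = aeval (fun i : Fin n => if h : i ∈ T then (X ⟨i, h⟩ : MvPolynomial {i : Fin n // i ∈ T} K) else 1)) :
    intClG (Ideal.map φ I) = Ideal.map φ (intClG I) := by
  subst hφ
  exact le_antisymm (intClG_map_le_map_intClG (· ∈ T) hI) (map_intClG_le_intClG_map (· ∈ T) I)
end
end
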